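/- Let M be an n×n positive semi-definite real symmetric matrix written in block form M = [[M₁, N],[Nᵀ, M₂]] where M₁ is k×k, M₂ is (n−k)×(n−k) and N is k×(n−k). Then 0 ≤ det(M₁)det(M₂) − det(M) ≤ k(n−k)·Tr(NᵀN)·‖M‖_∞^{n−2}, where ‖M‖_∞ := max_{i,j} |M_{i,j}|. -/

import Mathlib

/-!
Perturbing `M` by `ε • 1` makes both diagonal blocks positive definite, and both sides of the
inequality are continuous in `ε`, so we may assume `M₁, M₂ ≻ 0`. The Schur complement gives
`det M = det M₂ · det (M₁ - S)` with `S = N M₂⁻¹ Nᵀ` and `0 ≤ S ≤ M₁`. Writing `M₁ = R Rᵀ`, the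
matrix `T = R⁻¹ S R⁻ᵀ` satisfies `0 ≤ T ≤ 1`, so its eigenvalues `μᵢ` lie in `[0, 1]` and
`1 - ∑ μᵢ ≤ det (1 - T) = ∏ (1 - μᵢ) ≤ 1`. Hence
`0 ≤ det M₁ det M₂ - det M ≤ tr (adj M₁ · N adj M₂ Nᵀ) ≤ tr (adj M₁) · tr (adj M₂) · tr (Nᵀ N)`,
using `tr (X Y) ≤ tr X · tr Y` for positive semidefinite `X, Y`. Finally, the diagonal entries of
`adj M₁` are principal minors of `M₁`, and by AM-GM on its eigenvalues a positive semidefinite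
matrix with diagonal entries at most `c` has determinant at most `c ^ size`.
-/

open Finset Matrix
open scoped MatrixOrder

theorem Finset.one_sub_sum_le_prod_one_sub {ι R : Type*} [CommRing R] [LinearOrder R]
    [IsStrictOrderedRing R] (s : Finset ι) {f : ι → R} (h0 : ∀ i ∈ s, 0 ≤ f i)
    (h1 : ∀ i ∈ s, f i ≤ 1) : 1 - ∑ i ∈ s, f i ≤ ∏ i ∈ s, (1 - f i) := by
  induction s using Finset.cons_induction with
  | empty => simp
  | cons a s ha ih =>
    rw [prod_cons, sum_cons]
    have ih := ih (fun i hi ↦ h0 i (mem_cons_of_mem hi)) (fun i hi ↦ h1 i (mem_cons_of_mem hi))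
    have hsum : 0 ≤ ∑ i ∈ s, f i := sum_nonneg fun i hi ↦ h0 i (mem_cons_of_mem hi)
    have ha0 := h0 a (mem_cons_self a s)
    have ha1 := h1 a (mem_cons_self a s)
    nlinarith [mul_le_mul_of_nonneg_left ih (sub_nonneg.2 ha1)]

theorem Real.prod_le_pow_card_of_sum_le {ι : Type*} (s : Finset ι) {f : ι → ℝ} {c : ℝ}
    (hf : ∀ i ∈ s, 0 ≤ f i) (h : ∑ i ∈ s, f i ≤ #s * c) : ∏ i ∈ s, f i ≤ c ^ #s := by
  rcases s.eq_empty_or_nonempty with rfl | hs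
  · simp
  have hcard : (0 : ℝ) < #s := by exact_mod_cast hs.card_pos
  have hmean : ∏ i ∈ s, f i ^ (#s : ℝ)⁻¹ ≤ c := by
    refine (geom_mean_le_arith_mean_weighted s (fun _ ↦ (#s : ℝ)⁻¹) f (fun _ _ ↦ by positivity)
      (by simp [hcard.ne']) hf).trans ?_
    rw [← mul_sum, inv_mul_le_iff₀ hcard]
    exact h
  have hprod : 0 ≤ ∏ i ∈ s, f i := prod_nonneg hf
  calc ∏ i ∈ s, f i = ((∏ i ∈ s, f i) ^ (#s : ℝ)⁻¹) ^ #s := by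
        rw [← Real.rpow_natCast, ← Real.rpow_mul hprod, inv_mul_cancel₀ hcard.ne', Real.rpow_one]
    _ ≤ c ^ #s := by
        rw [← Real.finsetProd_rpow s f hf]
        exact pow_le_pow_left₀ (prod_nonneg fun i hi ↦ Real.rpow_nonneg (hf i hi) _) hmean _

namespace Matrix

section Blocks

variable {m n : Type*}

theorem PosSemidef.toBlocks₁₁ {R : Type*} [Ring R] [PartialOrder R] [StarRing R]
    {M : Matrix (m ⊕ n) (m ⊕ n) R} (hM : M.PosSemidef) : M.toBlocks₁₁.PosSemidef :=
  hM.submatrix Sum.inl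

theorem PosSemidef.toBlocks₂₂ {R : Type*} [Ring R] [PartialOrder R] [StarRing R]
    {M : Matrix (m ⊕ n) (m ⊕ n) R} (hM : M.PosSemidef) : M.toBlocks₂₂.PosSemidef :=
  hM.submatrix Sum.inr

theorem fromBlocks_add_smul_one {α : Type*} [Semiring α] [DecidableEq m] [DecidableEq n]
    (A : Matrix m m α) (B : Matrix m n α) (C : Matrix n m α) (D : Matrix n n α) (r : α) :
    fromBlocks A B C D + r • 1 = fromBlocks (A + r • 1) B C (D + r • 1) := by
  rw [← fromBlocks_one, fromBlocks_smul, fromBlocks_add]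
  simp

end Blocks

variable {n : Type*} [Fintype n] [DecidableEq n]

theorem PosSemidef.trace_mul_nonneg {A B : Matrix n n ℝ} (hA : A.PosSemidef) (hB : B.PosSemidef) :
    0 ≤ (A * B).trace := by
  set R := CFC.sqrt A
  have hRR : R * R = A := CFC.sqrt_mul_sqrt_self A hA.nonneg
  have hRH : Rᴴ = R := (CFC.sqrt_nonneg A).posSemidef.1
  have hRBR := hB.mul_mul_conjTranspose_same R
  rw [hRH] at hRBR
  rw [← hRR, Matrix.mul_assoc, trace_mul_comm]
  exact hRBR.trace_nonneg

theorem PosSemidef.posSemidef_trace_smul_one_sub {A : Matrix n n ℝ} (hA : A.PosSemidef) :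
    (A.trace • 1 - A).PosSemidef := by
  rw [← Algebra.algebraMap_eq_smul_one, ← Matrix.le_iff,
    le_algebraMap_iff_spectrum_le hA.1.isSelfAdjoint, hA.1.spectrum_real_eq_range_eigenvalues]
  rintro _ ⟨i, rfl⟩
  rw [hA.1.trace_eq_sum_eigenvalues]
  simpa using single_le_sum (fun j _ ↦ hA.eigenvalues_nonneg j) (mem_univ i)

theorem PosSemidef.trace_mul_le {A B : Matrix n n ℝ} (hA : A.PosSemidef) (hB : B.PosSemidef) :
    (A * B).trace ≤ A.trace * B.trace := by
  have := hA.posSemidef_trace_smul_one_sub.trace_mul_nonneg hB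
  rwa [Matrix.sub_mul, trace_sub, smul_mul, Matrix.one_mul, trace_smul, smul_eq_mul,
    sub_nonneg] at this

theorem IsHermitian.det_one_sub {T : Matrix n n ℝ} (hT : T.IsHermitian) :
    (1 - T).det = ∏ i, (1 - hT.eigenvalues i) := by
  have := T.eval_charpoly 1
  rw [hT.charpoly_eq, Polynomial.eval_prod] at this
  simpa using this.symm

theorem PosSemidef.eigenvalues_le_one {T : Matrix n n ℝ} (hT : T.PosSemidef)
    (hT1 : (1 - T).PosSemidef) (i : n) : hT.1.eigenvalues i ≤ 1 :=
  (CFC.le_one_iff T hT.1.isSelfAdjoint).1 (Matrix.le_iff.2 hT1) _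
    (hT.1.spectrum_real_eq_range_eigenvalues ▸ ⟨i, rfl⟩)

theorem PosSemidef.det_one_sub_mem_Icc {T : Matrix n n ℝ} (hT : T.PosSemidef)
    (hT1 : (1 - T).PosSemidef) : (1 - T).det ∈ Set.Icc (1 - T.trace) 1 := by
  have h0 := hT.eigenvalues_nonneg
  have h1 := hT.eigenvalues_le_one hT1
  rw [hT.1.det_one_sub, hT.1.trace_eq_sum_eigenvalues]
  refine ⟨by simpa using one_sub_sum_le_prod_one_sub univ (fun i _ ↦ h0 i) (fun i _ ↦ h1 i), ?_⟩
  exact prod_le_one (fun i _ ↦ sub_nonneg.2 (h1 i)) (fun i _ ↦ sub_le_self _ (h0 i))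

theorem PosSemidef.det_le_pow_card {A : Matrix n n ℝ} (hA : A.PosSemidef) {c : ℝ}
    (hc : ∀ i, A i i ≤ c) : A.det ≤ c ^ Fintype.card n := by
  have htrace : ∑ i, hA.1.eigenvalues i ≤ #(univ : Finset n) * c := by
    have := hA.1.trace_eq_sum_eigenvalues
    simp only [RCLike.ofReal_real_eq_id, id_eq] at this
    rw [← this]
    exact (sum_le_sum fun i _ ↦ hc i).trans_eq (by simp)
  simpa [hA.1.det_eq_prod_eigenvalues] using
    Real.prod_le_pow_card_of_sum_le univ (fun i _ ↦ hA.eigenvalues_nonneg i) htrace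

theorem adjugate_eq_det_smul_inv {K : Type*} [Field K] {A : Matrix n n K} (hA : A.det ≠ 0) :
    adjugate A = A.det • A⁻¹ := by
  rw [inv_def, Ring.inverse_eq_inv', smul_smul, mul_inv_cancel₀ hA, one_smul]

theorem PosDef.posSemidef_adjugate {A : Matrix n n ℝ} (hA : A.PosDef) :
    (adjugate A).PosSemidef := by
  rw [adjugate_eq_det_smul_inv hA.det_pos.ne']
  exact hA.inv.posSemidef.smul hA.det_pos.le

theorem PosDef.det_sub_det_sub_mem_Icc {A S : Matrix n n ℝ} (hA : A.PosDef) (hS : S.PosSemidef)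
    (hAS : (A - S).PosSemidef) : A.det - (A - S).det ∈ Set.Icc 0 (adjugate A * S).trace := by
  set R := CFC.sqrt A
  have hRR : R * Rᴴ = A := by
    rw [(CFC.sqrt_nonneg A).posSemidef.1.eq]
    exact CFC.sqrt_mul_sqrt_self A hA.posSemidef.nonneg
  have hR : IsUnit R.det := by
    refine isUnit_iff_ne_zero.2 fun h0 ↦ hA.det_pos.ne' ?_
    rw [← hRR, det_mul, h0, zero_mul]
  have hRinv : R * R⁻¹ = 1 := mul_nonsing_inv R hR
  have hRinvH : R⁻¹ᴴ * Rᴴ = 1 := by rw [← conjTranspose_mul, hRinv, conjTranspose_one]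
  set T := R⁻¹ * S * R⁻¹ᴴ
  have hT : T.PosSemidef := hS.mul_mul_conjTranspose_same R⁻¹
  have hAS_eq : A - S = R * (1 - T) * Rᴴ := by
    simp only [T, Matrix.mul_sub, Matrix.sub_mul, Matrix.mul_one, hRR, Matrix.mul_assoc, hRinvH]
    rw [← Matrix.mul_assoc, hRinv, Matrix.one_mul]
  have hT1 : (1 - T).PosSemidef := by
    have h := hAS.mul_mul_conjTranspose_same R⁻¹
    rwa [hAS_eq, ← Matrix.mul_assoc, ← Matrix.mul_assoc, nonsing_inv_mul R hR, Matrix.one_mul,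
      Matrix.mul_assoc, ← conjTranspose_mul, nonsing_inv_mul R hR, conjTranspose_one,
      Matrix.mul_one] at h
  have hdet : (A - S).det = A.det * (1 - T).det := by
    rw [hAS_eq, det_mul, det_mul, ← hRR, det_mul]
    ring
  have htrace : (adjugate A * S).trace = A.det * T.trace := by
    rw [adjugate_eq_det_smul_inv hA.det_pos.ne', smul_mul, trace_smul, smul_eq_mul, ← hRR,
      Matrix.mul_inv_rev, ← conjTranspose_nonsing_inv, Matrix.mul_assoc, trace_mul_comm]
  obtain ⟨hlow, hup⟩ := hT.det_one_sub_mem_Icc hT1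
  have hdetA := hA.det_pos
  rw [hdet, htrace]
  constructor <;> nlinarith

theorem adjugate_fin_succ_apply_self {α : Type*} [CommRing α] {m : ℕ}
    (A : Matrix (Fin (m + 1)) (Fin (m + 1)) α) (i : Fin (m + 1)) :
    adjugate A i i = (A.submatrix i.succAbove i.succAbove).det := by
  rw [adjugate_fin_succ_eq_det_submatrix, Even.neg_one_pow ⟨i, rfl⟩, one_mul]

theorem PosSemidef.trace_adjugate_mem_Icc {m : ℕ} {A : Matrix (Fin m) (Fin m) ℝ}
    (hA : A.PosSemidef) {c : ℝ} (hc : ∀ i, A i i ≤ c) :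
    (adjugate A).trace ∈ Set.Icc 0 (m * c ^ (m - 1)) := by
  cases m with
  | zero => simp [trace]
  | succ m =>
    have hdiag (i : Fin (m + 1)) : adjugate A i i ∈ Set.Icc 0 (c ^ m) := by
      have hminor := hA.submatrix i.succAbove
      rw [adjugate_fin_succ_apply_self]
      exact ⟨hminor.det_nonneg, by simpa using hminor.det_le_pow_card fun j ↦ hc _⟩
    refine ⟨sum_nonneg fun i _ ↦ (hdiag i).1, ?_⟩
    exact (sum_le_sum fun i _ ↦ (hdiag i).2).trans_eq (by simp)

variable {m : Type*} [Fintype m] [DecidableEq m]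

theorem det_mul_det_sub_det_fromBlocks_mem_Icc_of_posDef {A : Matrix m m ℝ} {B : Matrix n n ℝ}
    {N : Matrix m n ℝ} (hM : (fromBlocks A N Nᵀ B).PosSemidef) (hA : A.PosDef) (hB : B.PosDef) :
    A.det * B.det - (fromBlocks A N Nᵀ B).det ∈
      Set.Icc 0 ((adjugate A).trace * (adjugate B).trace * (Nᵀ * N).trace) := by
  rw [← conjTranspose_eq_transpose_of_trivial] at hM ⊢
  have : Invertible B := B.invertibleOfIsUnitDet (isUnit_iff_ne_zero.2 hB.det_pos.ne')
  set S := N * B⁻¹ * Nᴴ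
  have hS : S.PosSemidef := hB.inv.posSemidef.mul_mul_conjTranspose_same N
  have hAS : (A - S).PosSemidef := (PosDef.fromBlocks₂₂ A N hB).1 hM
  have hgap : A.det * B.det - (fromBlocks A N Nᴴ B).det = B.det * (A.det - (A - S).det) := by
    rw [det_fromBlocks₂₂, invOf_eq_nonsing_inv]
    ring
  have hadjA := hA.posSemidef_adjugate
  have hadjB := hB.posSemidef_adjugate
  obtain ⟨hlow, hup⟩ := hA.det_sub_det_sub_mem_Icc hS hAS
  rw [hgap]
  refine ⟨mul_nonneg hB.det_pos.le hlow, ?_⟩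
  calc B.det * (A.det - (A - S).det)
      ≤ B.det * (adjugate A * S).trace := mul_le_mul_of_nonneg_left hup hB.det_pos.le
    _ = (adjugate A * (N * adjugate B * Nᴴ)).trace := by
      rw [adjugate_eq_det_smul_inv hB.det_pos.ne', Matrix.mul_smul, Matrix.smul_mul,
        Matrix.mul_smul, trace_smul, smul_eq_mul]
    _ ≤ (adjugate A).trace * (N * adjugate B * Nᴴ).trace :=
      hadjA.trace_mul_le (hadjB.mul_mul_conjTranspose_same N)
    _ = (adjugate A).trace * (adjugate B * (Nᴴ * N)).trace := by
      rw [Matrix.mul_assoc, trace_mul_comm, Matrix.mul_assoc]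
    _ ≤ (adjugate A).trace * ((adjugate B).trace * (Nᴴ * N).trace) :=
      mul_le_mul_of_nonneg_left (hadjB.trace_mul_le (posSemidef_conjTranspose_mul_self N))
        hadjA.trace_nonneg
    _ = _ := (mul_assoc _ _ _).symm

open Filter Topology in
theorem PosSemidef.det_mul_det_sub_det_fromBlocks_mem_Icc {A : Matrix m m ℝ} {B : Matrix n n ℝ}
    {N : Matrix m n ℝ} (hM : (fromBlocks A N Nᵀ B).PosSemidef) :
    A.det * B.det - (fromBlocks A N Nᵀ B).det ∈
      Set.Icc 0 ((adjugate A).trace * (adjugate B).trace * (Nᵀ * N).trace) := by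
  let gap (ε : ℝ) : ℝ := (A + ε • 1).det * (B + ε • 1).det - (fromBlocks A N Nᵀ B + ε • 1).det
  let bound (ε : ℝ) : ℝ :=
    (adjugate (A + ε • 1)).trace * (adjugate (B + ε • 1)).trace * (Nᵀ * N).trace
  have hpos : ∀ ε > 0, gap ε ∈ Set.Icc 0 (bound ε) := by
    intro ε hε
    have hA : (A + ε • 1).PosDef := PosDef.posSemidef_add hM.toBlocks₁₁ (PosDef.one.smul hε)
    have hB : (B + ε • 1).PosDef := PosDef.posSemidef_add hM.toBlocks₂₂ (PosDef.one.smul hε)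
    have hMε := hM.add (PosDef.one.smul hε).posSemidef
    simp only [gap, bound, fromBlocks_add_smul_one] at hMε ⊢
    exact det_mul_det_sub_det_fromBlocks_mem_Icc_of_posDef hMε hA hB
  have hgap : Tendsto gap (𝓝[>] 0) (𝓝 (gap 0)) := by
    refine Continuous.tendsto ?_ 0 |>.mono_left nhdsWithin_le_nhds
    fun_prop
  have hbound : Tendsto bound (𝓝[>] 0) (𝓝 (bound 0)) := by
    refine Continuous.tendsto ?_ 0 |>.mono_left nhdsWithin_le_nhds
    fun_prop
  have h0 : gap 0 ∈ Set.Icc 0 (bound 0) :=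
    ⟨ge_of_tendsto hgap (eventually_nhdsWithin_of_forall fun ε hε ↦ (hpos ε hε).1),
      le_of_tendsto_of_tendsto hgap hbound
        (eventually_nhdsWithin_of_forall fun ε hε ↦ (hpos ε hε).2)⟩
  simpa [gap, bound] using h0

end Matrix

/-- For a PSD block matrix `M = [[M₁, N],[Nᵀ, M₂]]` of size `n = k + l`:
`0 ≤ det M₁ det M₂ − det M ≤ k·l·Tr(NᵀN)·‖M‖_∞^{n−2}`, where `c` is any bound on the
absolute values of the entries of `M` (in particular `c = ‖M‖_∞`). -/
theorem stmt5 {k l : ℕ} (M₁ : Matrix (Fin k) (Fin k) ℝ) (M₂ : Matrix (Fin l) (Fin l) ℝ)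
    (N : Matrix (Fin k) (Fin l) ℝ)
    (h : (Matrix.fromBlocks M₁ N Nᵀ M₂).PosSemidef)
    (c : ℝ) (hc : ∀ i j, |Matrix.fromBlocks M₁ N Nᵀ M₂ i j| ≤ c) :
    0 ≤ M₁.det * M₂.det - (Matrix.fromBlocks M₁ N Nᵀ M₂).det ∧
    M₁.det * M₂.det - (Matrix.fromBlocks M₁ N Nᵀ M₂).det ≤
      (k : ℝ) * l * (Nᵀ * N).trace * c ^ (k + l - 2) := by
  obtain ⟨hgap₀, hgap⟩ := h.det_mul_det_sub_det_fromBlocks_mem_Icc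
  have hM₁ : M₁.PosSemidef := by simpa using h.toBlocks₁₁
  have hM₂ : M₂.PosSemidef := by simpa using h.toBlocks₂₂
  obtain ⟨hadj₁₀, hadj₁⟩ :=
    hM₁.trace_adjugate_mem_Icc fun i ↦ (le_abs_self _).trans (hc (.inl i) (.inl i))
  obtain ⟨hadj₂₀, hadj₂⟩ :=
    hM₂.trace_adjugate_mem_Icc fun i ↦ (le_abs_self _).trans (hc (.inr i) (.inr i))
  have hNN : 0 ≤ (Nᵀ * N).trace := by
    simpa using (posSemidef_conjTranspose_mul_self N).trace_nonneg
  refine ⟨hgap₀, hgap.trans ?_⟩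
  calc (adjugate M₁).trace * (adjugate M₂).trace * (Nᵀ * N).trace
      ≤ (k * c ^ (k - 1)) * (l * c ^ (l - 1)) * (Nᵀ * N).trace := by
        gcongr
        exact hadj₁₀.trans hadj₁
    _ = (k : ℝ) * l * (Nᵀ * N).trace * c ^ (k + l - 2) := by
        rcases k with _ | k
        · simp
        rcases l with _ | l
        · simp
        rw [show k + 1 + (l + 1) - 2 = k + l by omega, pow_add]
        simp only [Nat.add_sub_cancel]
        ring
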